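/- arXiv:2602.08714 — 2 statements merged into one kernel-verified Lean document; each statement's English description precedes it below -/
import Mathlib

section
/- Let n ≥ 2, m ≥ n, k ≥ 1 an integer, and ρ ∈ (0,1]. For each agent i, let T_i ⊆ G with |T_i| = n−1 be a set of top goods of agent i (i.e., v_i(g) ≥ v_i(g') for every g ∈ T_i and g' ∉ T_i), and let t_i = min_{g ∈ T_i} v_i(g). Define the virtual valuation ṽ_i : G → ℝ by: ṽ_i(g) = v_i(g) for g ∈ T_i; for g ∉ T_i with v_i(g) ≥ t_i · m^{−k/(k+1)}, ṽ_i(g) = t_i · m^{−ℓ/(k+1)} where ℓ ∈ {1,…,k} is the smallest index such that v_i(g) ≥ t_i · m^{−ℓ/(k+1)}; and ṽ_i(g) = 0 for g ∉ T_i with v_i(g) < t_i · m^{−k/(k+1)}. Then every allocation X that is ρ-EFX with respect to the additive valuations (ṽ_1,…,ṽ_n) is (ρ/(2·m^{1/(k+1)}))-EFX with respect to (v_1,…,v_n). -/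
/-!
Rounding `v i` down to the buckets `t i * m ^ (-ℓ/(k+1))` loses a factor of at most
`M = m ^ (1/(k+1))` on every good, except for goods rounded to `0`, each worth less than
`t i * m ^ (-k/(k+1))`; as there are at most `m` of them, `v i S ≤ M * (ṽ i S + t i)` for every
bundle `S`. It remains to see that `ρ * t i ≤ ṽ i (X i)` whenever `X j \ {g}` is nonempty. Otherwise
`ρ`-EFX for `ṽ i` forces each of the `n - 1` top goods of `i` into a bundle other than `X i` that
contains nothing else, so all `n - 1` other agents, `j` among them, hold at most one good.
Adding `ρ * ṽ i (X j \ {g}) ≤ ṽ i (X i) ≤ v i (X i)` gives the factor `ρ / (2 * M)`.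
-/

open Finset

variable {α ι : Type*}

/-- `vt` is the paper's virtual valuation `ṽ` of `v`, for the top goods `T` and `t = min_T v`. -/
structure IsVirtualValuation (m : ℝ) (k : ℕ) (v vt : α → ℝ) (T : Finset α) (t : ℝ) : Prop where
  isTop : ∀ g ∈ T, ∀ g' ∉ T, v g' ≤ v g
  exists_eq_threshold : ∃ g ∈ T, v g = t
  threshold_le : ∀ g ∈ T, t ≤ v g
  eq_of_mem : ∀ g ∈ T, vt g = v g
  bucket : ∀ g ∉ T, t * m ^ (-(k : ℝ) / ((k : ℝ) + 1)) ≤ v g →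
    ∃ ℓ : ℕ, 1 ≤ ℓ ∧ ℓ ≤ k ∧
      t * m ^ (-(ℓ : ℝ) / ((k : ℝ) + 1)) ≤ v g ∧
      (∀ ℓ' : ℕ, 1 ≤ ℓ' → ℓ' < ℓ → v g < t * m ^ (-(ℓ' : ℝ) / ((k : ℝ) + 1))) ∧
      vt g = t * m ^ (-(ℓ : ℝ) / ((k : ℝ) + 1))
  eq_zero_of_lt : ∀ g ∉ T, v g < t * m ^ (-(k : ℝ) / ((k : ℝ) + 1)) → vt g = 0

theorem rpow_one_div_mul_rpow_neg_div {m d : ℝ} (hm : 0 < m) (hd : d ≠ 0) {ℓ : ℕ} (hℓ : 1 ≤ ℓ) :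
    m ^ (1 / d) * m ^ (-(ℓ : ℝ) / d) = m ^ (-((ℓ - 1 : ℕ) : ℝ) / d) := by
  rw [← Real.rpow_add hm, Nat.cast_sub hℓ]
  congr 1
  field_simp
  ring

theorem mul_rpow_neg_div_add_one {m : ℝ} (hm : 0 < m) (k : ℕ) :
    m * m ^ (-(k : ℝ) / ((k : ℝ) + 1)) = m ^ (1 / ((k : ℝ) + 1)) := by
  conv_lhs => lhs; rw [← Real.rpow_one m]
  rw [← Real.rpow_add hm]
  congr 1
  field_simp
  ring

namespace IsVirtualValuation

variable {m : ℝ} {k : ℕ} {v vt : α → ℝ} {T : Finset α} {t : ℝ}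

theorem le_threshold (h : IsVirtualValuation m k v vt T t) {g : α} (hg : g ∉ T) : v g ≤ t := by
  obtain ⟨g₀, hg₀, rfl⟩ := h.exists_eq_threshold
  exact h.isTop g₀ hg₀ g hg

theorem threshold_nonneg (h : IsVirtualValuation m k v vt T t) (hv : ∀ g, 0 ≤ v g) : 0 ≤ t := by
  obtain ⟨g₀, -, rfl⟩ := h.exists_eq_threshold
  exact hv g₀

theorem threshold_le_of_mem (h : IsVirtualValuation m k v vt T t) {g : α} (hg : g ∈ T) :
    t ≤ vt g :=
  (h.eq_of_mem g hg).symm ▸ h.threshold_le g hg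

theorem nonneg (h : IsVirtualValuation m k v vt T t) (hv : ∀ g, 0 ≤ v g) (hm : 0 ≤ m) (g : α) :
    0 ≤ vt g := by
  by_cases hT : g ∈ T
  · exact h.eq_of_mem g hT ▸ hv g
  by_cases hmid : t * m ^ (-(k : ℝ) / ((k : ℝ) + 1)) ≤ v g
  · obtain ⟨ℓ, -, -, -, -, hℓ⟩ := h.bucket g hT hmid
    rw [hℓ]
    exact mul_nonneg (h.threshold_nonneg hv) (Real.rpow_nonneg hm _)
  · rw [h.eq_zero_of_lt g hT (not_le.mp hmid)]

theorem le (h : IsVirtualValuation m k v vt T t) (hv : ∀ g, 0 ≤ v g) (g : α) : vt g ≤ v g := by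
  by_cases hT : g ∈ T
  · exact (h.eq_of_mem g hT).le
  by_cases hmid : t * m ^ (-(k : ℝ) / ((k : ℝ) + 1)) ≤ v g
  · obtain ⟨ℓ, -, -, hℓle, -, hℓ⟩ := h.bucket g hT hmid
    exact hℓ ▸ hℓle
  · exact h.eq_zero_of_lt g hT (not_le.mp hmid) ▸ hv g

theorem le_rpow_mul_add (h : IsVirtualValuation m k v vt T t) (hv : ∀ g, 0 ≤ v g) (hm : 1 ≤ m)
    (g : α) :
    v g ≤ m ^ (1 / ((k : ℝ) + 1)) * vt g + t * m ^ (-(k : ℝ) / ((k : ℝ) + 1)) := by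
  have hm0 : 0 < m := by linarith
  have hM : 1 ≤ m ^ (1 / ((k : ℝ) + 1)) := Real.one_le_rpow hm (by positivity)
  have hc : 0 ≤ t * m ^ (-(k : ℝ) / ((k : ℝ) + 1)) :=
    mul_nonneg (h.threshold_nonneg hv) (Real.rpow_nonneg hm0.le _)
  by_cases hT : g ∈ T
  · rw [h.eq_of_mem g hT]
    nlinarith [hv g]
  by_cases hmid : t * m ^ (-(k : ℝ) / ((k : ℝ) + 1)) ≤ v g
  · obtain ⟨ℓ, hℓ1, -, -, hmin, hℓ⟩ := h.bucket g hT hmid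
    -- by minimality of `ℓ` (or `v g ≤ t` if `ℓ = 1`), `v g` is below the next boundary up
    have hnext : v g ≤ t * m ^ (-((ℓ - 1 : ℕ) : ℝ) / ((k : ℝ) + 1)) := by
      rcases hℓ1.eq_or_lt with rfl | hℓ2
      · simpa using h.le_threshold hT
      · exact (hmin (ℓ - 1) (by omega) (by omega)).le
    rw [← rpow_one_div_mul_rpow_neg_div hm0 (by positivity) hℓ1] at hnext
    rw [hℓ]
    linarith
  · rw [h.eq_zero_of_lt g hT (not_le.mp hmid)]
    linarith

theorem sum_le (h : IsVirtualValuation m k v vt T t) (hv : ∀ g, 0 ≤ v g) (hm : 1 ≤ m)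
    (S : Finset α) (hS : (#S : ℝ) ≤ m) :
    S.sum v ≤ m ^ (1 / ((k : ℝ) + 1)) * (S.sum vt + t) := by
  have hc : 0 ≤ t * m ^ (-(k : ℝ) / ((k : ℝ) + 1)) :=
    mul_nonneg (h.threshold_nonneg hv) (Real.rpow_nonneg (by linarith) _)
  calc S.sum v
      ≤ ∑ g ∈ S, (m ^ (1 / ((k : ℝ) + 1)) * vt g + t * m ^ (-(k : ℝ) / ((k : ℝ) + 1))) :=
        sum_le_sum fun g _ => h.le_rpow_mul_add hv hm g
    _ = m ^ (1 / ((k : ℝ) + 1)) * S.sum vt + #S * (t * m ^ (-(k : ℝ) / ((k : ℝ) + 1))) := by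
        rw [sum_add_distrib, ← mul_sum, sum_const, nsmul_eq_mul]
    _ ≤ m ^ (1 / ((k : ℝ) + 1)) * S.sum vt + m * (t * m ^ (-(k : ℝ) / ((k : ℝ) + 1))) := by
        gcongr
    _ = m ^ (1 / ((k : ℝ) + 1)) * (S.sum vt + t) := by
        rw [mul_left_comm, mul_rpow_neg_div_add_one (by linarith)]
        ring

end IsVirtualValuation

theorem exists_subset_singleton_of_card_eq [Fintype ι] [DecidableEq ι] {X : ι → Finset α}
    {T : Finset α} {i : ι} (hT : #T = Fintype.card ι - 1) (hcover : ∀ g ∈ T, ∃ j, g ∈ X j)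
    (hsingle : ∀ g ∈ T, ∀ j, g ∈ X j → j ≠ i ∧ X j ⊆ {g}) {j : ι} (hj : j ≠ i) :
    ∃ g, X j ⊆ {g} := by
  choose owner howner using hcover
  have hsurj := surj_on_of_inj_on_of_card_le (t := univ.erase i) owner
    (fun g hg => mem_erase.2 ⟨(hsingle g hg _ (howner g hg)).1, mem_univ _⟩)
    (fun a b ha hb hab =>
      (mem_singleton.1 ((hsingle a ha _ (howner a ha)).2 (hab ▸ howner b hb))).symm)
    (by rw [card_erase_of_mem (mem_univ i), card_univ, hT])
  obtain ⟨g, hg, rfl⟩ := hsurj j (mem_erase.2 ⟨hj, mem_univ j⟩)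
  exact ⟨g, (hsingle g hg _ (howner g hg)).2⟩

theorem mul_le_sum_of_erase_nonempty [Fintype ι] [DecidableEq ι] [DecidableEq α]
    {X : ι → Finset α} {T : Finset α} {w : α → ℝ} {t ρ : ℝ} {i j : ι} {g : α}
    (hρ0 : 0 ≤ ρ) (hρ1 : ρ ≤ 1) (hw : ∀ g, 0 ≤ w g) (htw : ∀ g ∈ T, t ≤ w g)
    (hT : #T = Fintype.card ι - 1) (hcover : ∀ g ∈ T, ∃ j, g ∈ X j)
    (hEFX : ∀ j, ∀ g ∈ X j, ρ * ((X j).erase g).sum w ≤ (X i).sum w)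
    (hj : j ≠ i) (hg : g ∈ X j) (hne : ((X j).erase g).Nonempty) :
    ρ * t ≤ (X i).sum w := by
  by_contra hlt
  have hsingle : ∀ g' ∈ T, ∀ j', g' ∈ X j' → j' ≠ i ∧ X j' ⊆ {g'} := by
    intro g' hg'T j' hg'X
    refine ⟨?_, fun h hh => mem_singleton.2 ?_⟩
    · rintro rfl
      exact hlt <| calc
        ρ * t ≤ ρ * w g' := mul_le_mul_of_nonneg_left (htw g' hg'T) hρ0
        _ ≤ w g' := mul_le_of_le_one_left (hw g') hρ1
        _ ≤ (X j').sum w := single_le_sum (fun x _ => hw x) hg'X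
    · by_contra hhg
      exact hlt <| calc
        ρ * t ≤ ρ * ((X j').erase h).sum w := mul_le_mul_of_nonneg_left
            ((htw g' hg'T).trans (single_le_sum (fun x _ => hw x)
              (mem_erase.2 ⟨Ne.symm hhg, hg'X⟩))) hρ0
        _ ≤ (X i).sum w := hEFX j' h hh
  obtain ⟨g₀, hg₀⟩ := exists_subset_singleton_of_card_eq hT hcover hsingle hj
  obtain ⟨g', hg'⟩ := hne
  obtain ⟨hg'g, hg'X⟩ := mem_erase.1 hg'
  exact hg'g ((mem_singleton.1 (hg₀ hg'X)).trans (mem_singleton.1 (hg₀ hg)).symm)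

theorem div_two_mul_mul_le_of_le_mul_add {ρ M a b t A : ℝ} (hM : 0 < M) (hρ : 0 ≤ ρ) (ha : a ≤ M * (b + t))
    (hb : ρ * b ≤ A) (ht : ρ * t ≤ A) : ρ / (2 * M) * a ≤ A :=
  calc ρ / (2 * M) * a ≤ ρ / (2 * M) * (M * (b + t)) := by gcongr
    _ = (ρ * b + ρ * t) / 2 := by field_simp
    _ ≤ A := by linarith

theorem stmt_4_general (n m k : ℕ)
    (ρ : ℝ) (hρ0 : 0 < ρ) (hρ1 : ρ ≤ 1)
    (v vt : Fin n → Fin m → ℝ)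
    (hv : ∀ i g, 0 ≤ v i g)
    (T : Fin n → Finset (Fin m))
    (hTcard : ∀ i, (T i).card = n - 1)
    (hTtop : ∀ i : Fin n, ∀ g ∈ T i, ∀ g' ∉ T i, v i g' ≤ v i g)
    (t : Fin n → ℝ)
    (htmem : ∀ i, ∃ g ∈ T i, v i g = t i)
    (htmin : ∀ i : Fin n, ∀ g ∈ T i, t i ≤ v i g)
    (hvtT : ∀ i : Fin n, ∀ g ∈ T i, vt i g = v i g)
    (hvtMid : ∀ i : Fin n, ∀ g ∉ T i,
      t i * (m : ℝ) ^ (-(k : ℝ) / ((k : ℝ) + 1)) ≤ v i g →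
      ∃ ℓ : ℕ, 1 ≤ ℓ ∧ ℓ ≤ k ∧
        t i * (m : ℝ) ^ (-(ℓ : ℝ) / ((k : ℝ) + 1)) ≤ v i g ∧
        (∀ ℓ' : ℕ, 1 ≤ ℓ' → ℓ' < ℓ → v i g < t i * (m : ℝ) ^ (-(ℓ' : ℝ) / ((k : ℝ) + 1))) ∧
        vt i g = t i * (m : ℝ) ^ (-(ℓ : ℝ) / ((k : ℝ) + 1)))
    (hvtLow : ∀ i : Fin n, ∀ g ∉ T i,
      v i g < t i * (m : ℝ) ^ (-(k : ℝ) / ((k : ℝ) + 1)) → vt i g = 0)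
    (X : Fin n → Finset (Fin m))
    (hcover : ∀ g : Fin m, ∃ i : Fin n, g ∈ X i)
    (hEFX : ∀ i j : Fin n, X j ≠ ∅ → ∀ g ∈ X j,
      ρ * ((X j).erase g).sum (vt i) ≤ (X i).sum (vt i)) :
    ∀ i j : Fin n, X j ≠ ∅ → ∀ g ∈ X j,
      (ρ / (2 * (m : ℝ) ^ ((1 : ℝ) / ((k : ℝ) + 1)))) * ((X j).erase g).sum (v i)
        ≤ (X i).sum (v i) := by
  intro i j hXj g hg
  have hvirt : IsVirtualValuation (m : ℝ) k (v i) (vt i) (T i) (t i) :=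
    ⟨hTtop i, htmem i, htmin i, hvtT i, hvtMid i, hvtLow i⟩
  have hm : (1 : ℝ) ≤ m := by exact_mod_cast g.pos
  have hM : 1 ≤ (m : ℝ) ^ ((1 : ℝ) / ((k : ℝ) + 1)) := Real.one_le_rpow hm (by positivity)
  have hS0 : 0 ≤ ((X j).erase g).sum (v i) := sum_nonneg fun x _ => hv i x
  by_cases hji : j = i
  · subst hji
    calc _ ≤ 1 * ((X j).erase g).sum (v j) := by
          gcongr
          rw [div_le_one (by positivity)]
          linarith
      _ ≤ (X j).sum (v j) := by
          rw [one_mul]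
          exact sum_le_sum_of_subset_of_nonneg (erase_subset g _) fun x _ _ => hv j x
  rcases ((X j).erase g).eq_empty_or_nonempty with hS | hS
  · rw [hS, sum_empty, mul_zero]
    exact sum_nonneg fun x _ => hv i x
  have hcard : (#((X j).erase g) : ℝ) ≤ m := by
    exact_mod_cast (card_le_univ _).trans_eq (Fintype.card_fin m)
  have hthreshold := mul_le_sum_of_erase_nonempty hρ0.le hρ1
    (hvirt.nonneg (hv i) (by positivity)) (fun g hg => hvirt.threshold_le_of_mem hg)
    (by simpa using hTcard i) (fun g _ => hcover g)
    (fun j g hg => hEFX i j (ne_empty_of_mem hg) g hg) hji hg hS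
  exact (div_two_mul_mul_le_of_le_mul_add (by positivity) hρ0.le (hvirt.sum_le (hv i) hm _ hcard)
    (hEFX i j hXj g hg) hthreshold).trans (sum_le_sum fun x _ => hvirt.le (hv i) x)

/-- With the virtual valuations `vt` defined explicitly by bucketing
(`vt i g = v i g` on the top set `T i`; `vt i g = t i · m^(-ℓ/(k+1))` where `ℓ ∈ [1,k]`
is least with `v i g ≥ t i · m^(-ℓ/(k+1))`, when such an `ℓ` exists; `vt i g = 0`
otherwise), every allocation that is `ρ`-EFX with respect to `vt` is
`(ρ/(2·m^(1/(k+1))))`-EFX with respect to `v`. -/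
theorem stmt_4 (n m k : ℕ) (hn : 2 ≤ n) (hm : n ≤ m) (hk : 1 ≤ k)
    (ρ : ℝ) (hρ0 : 0 < ρ) (hρ1 : ρ ≤ 1)
    (v vt : Fin n → Fin m → ℝ)
    (hv : ∀ i g, 0 ≤ v i g)
    (T : Fin n → Finset (Fin m))
    (hTcard : ∀ i, (T i).card = n - 1)
    (hTtop : ∀ i : Fin n, ∀ g ∈ T i, ∀ g' ∉ T i, v i g' ≤ v i g)
    (t : Fin n → ℝ)
    (htmem : ∀ i, ∃ g ∈ T i, v i g = t i)
    (htmin : ∀ i : Fin n, ∀ g ∈ T i, t i ≤ v i g)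
    (hvtT : ∀ i : Fin n, ∀ g ∈ T i, vt i g = v i g)
    (hvtMid : ∀ i : Fin n, ∀ g ∉ T i,
      t i * (m : ℝ) ^ (-(k : ℝ) / ((k : ℝ) + 1)) ≤ v i g →
      ∃ ℓ : ℕ, 1 ≤ ℓ ∧ ℓ ≤ k ∧
        t i * (m : ℝ) ^ (-(ℓ : ℝ) / ((k : ℝ) + 1)) ≤ v i g ∧
        (∀ ℓ' : ℕ, 1 ≤ ℓ' → ℓ' < ℓ → v i g < t i * (m : ℝ) ^ (-(ℓ' : ℝ) / ((k : ℝ) + 1))) ∧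
        vt i g = t i * (m : ℝ) ^ (-(ℓ : ℝ) / ((k : ℝ) + 1)))
    (hvtLow : ∀ i : Fin n, ∀ g ∉ T i,
      v i g < t i * (m : ℝ) ^ (-(k : ℝ) / ((k : ℝ) + 1)) → vt i g = 0)
    (X : Fin n → Finset (Fin m))
    (hdisj : ∀ i j : Fin n, i ≠ j → Disjoint (X i) (X j))
    (hcover : ∀ g : Fin m, ∃ i : Fin n, g ∈ X i)
    (hEFX : ∀ i j : Fin n, X j ≠ ∅ → ∀ g ∈ X j,
      ρ * ((X j).erase g).sum (vt i) ≤ (X i).sum (vt i)) :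
    ∀ i j : Fin n, X j ≠ ∅ → ∀ g ∈ X j,
      (ρ / (2 * (m : ℝ) ^ ((1 : ℝ) / ((k : ℝ) + 1)))) * ((X j).erase g).sum (v i)
        ≤ (X i).sum (v i) :=
  stmt_4_general n m k ρ hρ0 hρ1 v vt hv T hTcard hTtop t htmem htmin hvtT hvtMid hvtLow X hcover
    hEFX
end

section
/- Let n ≥ 2, k ≥ 2 an integer, and m ≥ 1, and fix λ ∈ {1,…,k−1}. Suppose the set G of m goods is partitioned into sets T, S_1,…,S_{k−1}, B with |T| = n−1, |S_λ| ≥ m^{(2λ−1)/(2k−1)}, and B ≠ ∅. Let w : G → ℝ be given by w(g) = √k for g ∈ T, w(g) = m^{−2(λ−1)/(2k−1)} for g ∈ S_λ, w(g) = m^{−2ℓ/(2k−1)} for g ∈ S_ℓ with ℓ ≠ λ, and w(g) = 0 for g ∈ B. Let X be the allocation in which agent n−1 receives a single good from T (i.e., X_{n−1} = {g'} for some g' ∈ T) and agent n receives all goods in G \ T. Then w(X_{n−1}) = √k and w(X_n \ {g}) ≥ m^{1/(2k−1)} for every g ∈ B; consequently, for any valuation profile in which agent n−1 has the additive valuation w,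 the allocation X is not α-EFX for any α > √k · m^{−1/(2k−1)}. -/
/-!
Agent `n-1` values its own bundle, a single good of `T`, at `√k`. Agent `n`'s bundle contains
all of `S_λ`, and since `B` is disjoint from `S_λ`, removing any good `g ∈ B` still leaves
`|S_λ| · m^(-2(λ-1)/(2k-1)) ≥ m^((2λ-1)/(2k-1) - 2(λ-1)/(2k-1)) = m^(1/(2k-1))` of value to agent
`n-1`. So for `α > √k · m^(-1/(2k-1))` agent `n-1` envies `X_n \ {g}` by more than the factor `α`.
-/

open Finset

def IsEFX {ι γ : Type*} [DecidableEq γ] (α : ℝ) (v : ι → γ → ℝ) (X : ι → Finset γ) : Prop :=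
  ∀ i j : ι, X j ≠ ∅ → ∀ g ∈ X j, α * ((X j).erase g).sum (v i) ≤ (X i).sum (v i)

theorem IsEFX.not_of_lt {ι γ : Type*} [DecidableEq γ] {α : ℝ} {v : ι → γ → ℝ}
    {X : ι → Finset γ} {i j : ι} {g : γ} (hg : g ∈ X j)
    (hlt : (X i).sum (v i) < α * ((X j).erase g).sum (v i)) : ¬ IsEFX α v X :=
  fun hX => (hX i j (ne_empty_of_mem hg) g hg).not_gt hlt

theorem rpow_one_div_le_sum {γ : Type*} {x a d : ℝ} (hx : 0 < x) {s t : Finset γ}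
    {f : γ → ℝ} (hst : s ⊆ t) (hf : ∀ i ∈ t, 0 ≤ f i)
    (hs : x ^ ((2 * a - 1) / d) ≤ s.card) (hfs : ∀ i ∈ s, f i = x ^ (-(2 * (a - 1)) / d)) :
    x ^ (1 / d) ≤ ∑ i ∈ t, f i :=
  calc x ^ (1 / d) = x ^ ((2 * a - 1) / d) * x ^ (-(2 * (a - 1)) / d) := by
        rw [← Real.rpow_add hx]; ring_nf
    _ ≤ s.card * x ^ (-(2 * (a - 1)) / d) := by gcongr
    _ = ∑ i ∈ s, f i := by rw [sum_congr rfl hfs, sum_const, nsmul_eq_mul]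
    _ ≤ ∑ i ∈ t, f i := sum_le_sum_of_subset_of_nonneg hst fun i hi _ => hf i hi

theorem lt_mul_of_mul_rpow_neg_lt {x c e α s : ℝ} (hx : 0 < x) (hc : 0 ≤ c)
    (hα : c * x ^ (-e) < α) (hs : x ^ e ≤ s) : c < α * s :=
  calc c = c * x ^ (-e) * x ^ e := by
        rw [mul_assoc, ← Real.rpow_add hx, neg_add_cancel, Real.rpow_zero, mul_one]
    _ < α * x ^ e := by gcongr
    _ ≤ α * s := by
        have : 0 ≤ c * x ^ (-e) := by positivity
        gcongr; linarith

theorem weight_nonneg {m k lam : ℕ} {T B : Finset (Fin m)} {S : ℕ → Finset (Fin m)}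
    {w : Fin m → ℝ}
    (hcoverG : ∀ g : Fin m, g ∈ T ∨ g ∈ B ∨ ∃ ℓ : ℕ, 1 ≤ ℓ ∧ ℓ ≤ k - 1 ∧ g ∈ S ℓ)
    (hwT : ∀ g ∈ T, w g = Real.sqrt k)
    (hwSlam : ∀ g ∈ S lam, w g = (m : ℝ) ^ (-(2 * ((lam : ℝ) - 1)) / (2 * (k : ℝ) - 1)))
    (hwS : ∀ ℓ : ℕ, 1 ≤ ℓ → ℓ ≤ k - 1 → ℓ ≠ lam → ∀ g ∈ S ℓ,
      w g = (m : ℝ) ^ (-(2 * (ℓ : ℝ)) / (2 * (k : ℝ) - 1)))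
    (hwB : ∀ g ∈ B, w g = 0) (g : Fin m) : 0 ≤ w g := by
  rcases hcoverG g with hT | hB | ⟨ℓ, h1, h2, hS⟩
  · rw [hwT g hT]; positivity
  · rw [hwB g hB]
  · by_cases hℓ : ℓ = lam
    · subst hℓ; rw [hwSlam g hS]; positivity
    · rw [hwS ℓ h1 h2 hℓ g hS]; positivity

/-- In the lower-bound instance (goods partitioned into
`T, S_1, …, S_{k-1}, B`, `|T| = n-1`, `|S_λ| ≥ m^((2λ-1)/(2k-1))`, `B ≠ ∅`) with the
valuation `w` that boosts the goods of `S_λ` to value `m^(-2(λ-1)/(2k-1))`: if agent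
`n-1` gets a single good of `T` and agent `n` gets all goods outside `T`, then
`w(X_{n-1}) = √k`, `w(X_n \ {g}) ≥ m^(1/(2k-1))` for every `g ∈ B`, and for every
valuation profile where agent `n-1` has valuation `w` the allocation is not `α`-EFX for
any `α > √k · m^(-1/(2k-1))`. -/
theorem stmt_6 (n k m : ℕ) (hn : 2 ≤ n) (hm : 1 ≤ m)
    (lam : ℕ) (hlam1 : 1 ≤ lam) (hlamk : lam ≤ k - 1)
    (T B : Finset (Fin m)) (S : ℕ → Finset (Fin m))
    (hSlam : (m : ℝ) ^ ((2 * (lam : ℝ) - 1) / (2 * (k : ℝ) - 1)) ≤ ((S lam).card : ℝ))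
    (hB : B ≠ ∅)
    (hcoverG : ∀ g : Fin m, g ∈ T ∨ g ∈ B ∨ ∃ ℓ : ℕ, 1 ≤ ℓ ∧ ℓ ≤ k - 1 ∧ g ∈ S ℓ)
    (hTB : Disjoint T B)
    (hTS : ∀ ℓ : ℕ, 1 ≤ ℓ → ℓ ≤ k - 1 → Disjoint T (S ℓ))
    (hBS : ∀ ℓ : ℕ, 1 ≤ ℓ → ℓ ≤ k - 1 → Disjoint B (S ℓ))
    (w : Fin m → ℝ)
    (hwT : ∀ g ∈ T, w g = Real.sqrt k)
    (hwSlam : ∀ g ∈ S lam, w g = (m : ℝ) ^ (-(2 * ((lam : ℝ) - 1)) / (2 * (k : ℝ) - 1)))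
    (hwS : ∀ ℓ : ℕ, 1 ≤ ℓ → ℓ ≤ k - 1 → ℓ ≠ lam → ∀ g ∈ S ℓ,
      w g = (m : ℝ) ^ (-(2 * (ℓ : ℝ)) / (2 * (k : ℝ) - 1)))
    (hwB : ∀ g ∈ B, w g = 0)
    (g' : Fin m) (hg' : g' ∈ T)
    (X : Fin n → Finset (Fin m))
    (hXn1 : X ⟨n - 2, by omega⟩ = {g'})
    (hXn : X ⟨n - 1, by omega⟩ = Finset.univ \ T) :
    (X ⟨n - 2, by omega⟩).sum w = Real.sqrt k ∧
    (∀ g ∈ B, (m : ℝ) ^ ((1 : ℝ) / (2 * (k : ℝ) - 1)) ≤ ((X ⟨n - 1, by omega⟩).erase g).sum w) ∧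
    (∀ v : Fin n → Fin m → ℝ, (∀ i g, 0 ≤ v i g) → v ⟨n - 2, by omega⟩ = w →
      ∀ α : ℝ, Real.sqrt k * (m : ℝ) ^ (-(1 : ℝ) / (2 * (k : ℝ) - 1)) < α →
        ¬ (∀ i j : Fin n, X j ≠ ∅ → ∀ g ∈ X j,
            α * ((X j).erase g).sum (v i) ≤ (X i).sum (v i))) := by
  have hm' : (0 : ℝ) < m := by exact_mod_cast hm
  have hw := weight_nonneg hcoverG hwT hwSlam hwS hwB
  have hown : (X ⟨n - 2, by omega⟩).sum w = Real.sqrt k := by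
    rw [hXn1, sum_singleton, hwT g' hg']
  have hother : ∀ g ∈ B, (m : ℝ) ^ ((1 : ℝ) / (2 * (k : ℝ) - 1)) ≤
      ((X ⟨n - 1, by omega⟩).erase g).sum w := by
    intro g hg
    refine rpow_one_div_le_sum hm' (fun x hx => ?_) (fun i _ => hw i) hSlam hwSlam
    rw [hXn, mem_erase, mem_sdiff]
    exact ⟨fun hxg => disjoint_left.mp (hBS lam hlam1 hlamk) (hxg ▸ hg) hx,
      mem_univ x, fun hxT => disjoint_left.mp (hTS lam hlam1 hlamk) hxT hx⟩
  refine ⟨hown, hother, fun v _ hvw α hα => ?_⟩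
  obtain ⟨g, hg⟩ := nonempty_iff_ne_empty.mpr hB
  have hgX : g ∈ X ⟨n - 1, by omega⟩ := by
    rw [hXn, mem_sdiff]
    exact ⟨mem_univ g, fun hgT => disjoint_left.mp hTB hgT hg⟩
  refine IsEFX.not_of_lt (i := ⟨n - 2, by omega⟩) hgX ?_
  rw [neg_div] at hα
  rw [hvw, hown]
  exact lt_mul_of_mul_rpow_neg_lt hm' (Real.sqrt_nonneg k) hα (hother g hg)
end
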